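/- Let 0 < μ ≤ 1, ζ > 0, ϑ ≥ μζ, 0 < θ ≤ 1, λ > 0, let (Ω, F, ℙ) be a probability space and H : Ω → [0,∞) a random variable with 𝔼[E_{μ,ϑ}^{ζ}(2λ H^θ)] < ∞. Then for every n ∈ ℕ₀ the pmf of the time-changed fractional counting process satisfies z(n) := 𝔼[P(n, H)] = (ζ)_n Γ(ϑ) λ^n / n! · ∑_{k=0}^∞ ( (−λ)^k (ζ+n)_k / (k! Γ(μ(n+k)+ϑ)) ) · 𝔼[H^{θ(n+k)}], the series converging absolutely. -/

import Mathlib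

/-!
Expanding `P(n, t)` in powers of `t`, the `k`-th term is `c_k t^{θ(n+k)}`. Since
`(ζ+n)_k = (ζ)_{n+k} / (ζ)_n` and `(n+k)! ≤ n! k! 2^{n+k}`, the term `|c_k| t^{θ(n+k)}` is at most
a constant multiple of the `(n+k)`-th term of the series of `E_{μ,ϑ}^ζ(2λt^θ)`. Integrability of
`E_{μ,ϑ}^ζ(2λH^θ)` therefore dominates the whole series, and the expectation can be taken termwise.
The Mittag-Leffler series converges by the ratio test: by Wendel's inequality
`Γ(x+a) ≤ Γ(x) x^a` (log-convexity of `Γ`), the ratio `Γ(x)/Γ(x+μ)` tends to `0`.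
-/

open Real MeasureTheory

/-- Rising factorial (Pochhammer symbol) `(ζ)_n = Γ(ζ+n)/Γ(ζ)`. -/
noncomputable def risingFactorial (ζ : ℝ) (n : ℕ) : ℝ :=
  Real.Gamma (ζ + n) / Real.Gamma ζ

/-- Three-parameter (Prabhakar) Mittag-Leffler function. -/
noncomputable def mittagLeffler (μ ϑ ζ z : ℝ) : ℝ :=
  ∑' m : ℕ, risingFactorial ζ m * z ^ m / (m.factorial * Real.Gamma (μ * m + ϑ))

/-- Probability function of the fractional counting process. -/
noncomputable def fcpP (μ ϑ ζ θ lam : ℝ) (n : ℕ) (t : ℝ) : ℝ :=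
  risingFactorial ζ n * Real.Gamma ϑ * (lam * t ^ θ) ^ n / n.factorial *
    ∑' k : ℕ, risingFactorial (ζ + n) k * (-(lam * t ^ θ)) ^ k /
      (k.factorial * Real.Gamma (μ * (n + k : ℕ) + ϑ))

open Filter Topology
open scoped Nat

theorem risingFactorial_pos {ζ : ℝ} (hζ : 0 < ζ) (n : ℕ) : 0 < risingFactorial ζ n :=
  div_pos (Gamma_pos_of_pos (by positivity)) (Gamma_pos_of_pos hζ)

theorem risingFactorial_succ {ζ : ℝ} (hζ : 0 < ζ) (m : ℕ) :
    risingFactorial ζ (m + 1) = risingFactorial ζ m * (ζ + m) := by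
  rw [risingFactorial, risingFactorial, Nat.cast_succ, ← add_assoc, Gamma_add_one (by positivity)]
  ring

theorem risingFactorial_add {ζ : ℝ} (hζ : 0 < ζ) (n k : ℕ) :
    risingFactorial ζ (n + k) = risingFactorial ζ n * risingFactorial (ζ + n) k := by
  have : Gamma (ζ + n) ≠ 0 := (Gamma_pos_of_pos (by positivity)).ne'
  rw [risingFactorial, risingFactorial, risingFactorial, Nat.cast_add, ← add_assoc]
  field_simp

theorem Nat.add_factorial_le_factorial_mul_factorial_mul_two_pow (n k : ℕ) :
    (n + k)! ≤ n ! * k ! * 2 ^ (n + k) := by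
  rw [← Nat.add_choose_mul_factorial_mul_factorial n k, mul_assoc, mul_comm]
  exact Nat.mul_le_mul_left _ (Nat.choose_le_two_pow _ _)

theorem Real.Gamma_add_le_Gamma_mul_rpow {x a : ℝ} (hx : 0 < x) (ha0 : 0 < a) (ha1 : a < 1) :
    Gamma (x + a) ≤ Gamma x * x ^ a := by
  have hG := Gamma_pos_of_pos hx
  have h := Gamma_mul_add_mul_le_rpow_Gamma_mul_rpow_Gamma (by linarith : 0 < x + 1) hx ha0
    (sub_pos.2 ha1) (add_sub_cancel a 1)
  rw [Gamma_add_one hx.ne', mul_rpow hx.le hG.le] at h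
  calc Gamma (x + a) = Gamma (a * (x + 1) + (1 - a) * x) := by ring_nf
    _ ≤ x ^ a * (Gamma x ^ a * Gamma x ^ (1 - a)) := by rw [← mul_assoc]; exact h
    _ = Gamma x * x ^ a := by rw [← rpow_add hG, add_sub_cancel, rpow_one, mul_comm]

theorem Real.Gamma_div_Gamma_add_le {x a : ℝ} (ha0 : 0 < a) (ha1 : a < 1) (hx : a ≤ x) :
    Gamma x / Gamma (x + a) ≤ 2 * (x + a) ^ (-a) := by
  have hx0 : 0 < x := ha0.trans_le hx
  have hxa : 0 < x + a := by linarith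
  have hW := Gamma_add_le_Gamma_mul_rpow hxa (sub_pos.2 ha1) (sub_lt_self 1 ha0)
  rw [add_add_sub_cancel, Gamma_add_one hx0.ne', sub_eq_add_neg, rpow_add hxa, rpow_one] at hW
  have hY : 0 ≤ Gamma (x + a) * (x + a) ^ (-a) := by positivity
  rw [div_le_iff₀ (Gamma_pos_of_pos hxa)]
  nlinarith

theorem Real.tendsto_Gamma_div_Gamma_add_atTop {μ : ℝ} (hμ : 0 < μ) :
    Tendsto (fun x => Gamma x / Gamma (x + μ)) atTop (𝓝 0) := by
  -- Wendel's inequality needs an exponent below `1`; monotonicity of `Γ` on `[2, ∞)` lets us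
  -- replace `μ` by the smaller `a`.
  set a := min μ (1 / 2)
  have ha0 : 0 < a := lt_min hμ one_half_pos
  have ha1 : a < 1 := (min_le_right _ _).trans_lt one_half_lt_one
  have hlim : Tendsto (fun x => 2 * (x + a) ^ (-a)) atTop (𝓝 0) := by
    simpa using ((tendsto_rpow_neg_atTop ha0).comp
      (tendsto_atTop_add_const_right _ a tendsto_id)).const_mul 2
  refine tendsto_of_tendsto_of_tendsto_of_le_of_le' tendsto_const_nhds hlim ?_ ?_
  · filter_upwards [eventually_gt_atTop 0] with x hx
    have : 0 < x + μ := by linarith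
    positivity
  · filter_upwards [eventually_ge_atTop 2] with x hx
    have hmono : Gamma (x + a) ≤ Gamma (x + μ) :=
      Gamma_strictMonoOn_Ici.monotoneOn (by simp; linarith) (by simp; linarith)
        (by simp [a])
    calc Gamma x / Gamma (x + μ) ≤ Gamma x / Gamma (x + a) :=
          div_le_div_of_nonneg_left (Gamma_pos_of_pos (by linarith)).le
            (Gamma_pos_of_pos (by linarith)) hmono
      _ ≤ 2 * (x + a) ^ (-a) :=
          Gamma_div_Gamma_add_le ha0 ha1 (by linarith [min_le_right μ (1 / 2)])

noncomputable def mittagLefflerTerm (μ ϑ ζ z : ℝ) (m : ℕ) : ℝ :=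
  risingFactorial ζ m * z ^ m / (m ! * Gamma (μ * m + ϑ))

theorem mittagLeffler_eq_tsum (μ ϑ ζ z : ℝ) :
    mittagLeffler μ ϑ ζ z = ∑' m, mittagLefflerTerm μ ϑ ζ z m :=
  rfl

section MittagLeffler

variable {μ ϑ ζ : ℝ}

theorem mittagLefflerTerm_nonneg (hμ : 0 < μ) (hζ : 0 < ζ) (hϑ : 0 < ϑ) {z : ℝ} (hz : 0 ≤ z)
    (m : ℕ) : 0 ≤ mittagLefflerTerm μ ϑ ζ z m := by
  have := risingFactorial_pos hζ m
  unfold mittagLefflerTerm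
  positivity

theorem mittagLefflerTerm_succ (hμ : 0 < μ) (hζ : 0 < ζ) (hϑ : 0 < ϑ) (z : ℝ) (m : ℕ) :
    mittagLefflerTerm μ ϑ ζ z (m + 1) = mittagLefflerTerm μ ϑ ζ z m *
      (z * ((ζ + m) / (m + 1) * (Gamma (μ * m + ϑ) / Gamma (μ * m + ϑ + μ)))) := by
  have h1 : Gamma (μ * m + ϑ) ≠ 0 := (Gamma_pos_of_pos (by positivity)).ne'
  have h2 : Gamma (μ * m + ϑ + μ) ≠ 0 := (Gamma_pos_of_pos (by positivity)).ne'
  rw [mittagLefflerTerm, mittagLefflerTerm, risingFactorial_succ hζ,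
    show μ * ((m + 1 : ℕ) : ℝ) + ϑ = μ * m + ϑ + μ by push_cast; ring,
    Nat.factorial_succ, pow_succ, Nat.cast_mul, Nat.cast_succ]
  field_simp

theorem summable_mittagLefflerTerm (hμ : 0 < μ) (hζ : 0 < ζ) (hϑ : 0 < ϑ) (z : ℝ) :
    Summable (mittagLefflerTerm μ ϑ ζ z) := by
  have hlim : Tendsto (fun m : ℕ => |z| * (ζ + 1) *
      (Gamma (μ * m + ϑ) / Gamma (μ * m + ϑ + μ))) atTop (𝓝 0) := by
    have hx : Tendsto (fun m : ℕ => μ * m + ϑ) atTop atTop :=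
      tendsto_atTop_add_const_right _ _ (tendsto_natCast_atTop_atTop.const_mul_atTop hμ)
    simpa using ((tendsto_Gamma_div_Gamma_add_atTop hμ).comp hx).const_mul (|z| * (ζ + 1))
  refine summable_of_ratio_norm_eventually_le one_half_lt_one ?_
  filter_upwards [hlim.eventually (ge_mem_nhds one_half_pos)] with m hm
  have hR : 0 ≤ Gamma (μ * m + ϑ) / Gamma (μ * m + ϑ + μ) := by positivity
  have hq : (ζ + m) / (m + 1) ≤ ζ + 1 := by
    rw [div_le_iff₀ (by positivity)]
    nlinarith [(Nat.cast_nonneg m : (0 : ℝ) ≤ m)]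
  rw [mittagLefflerTerm_succ hμ hζ hϑ, norm_mul, norm_mul,
    Real.norm_of_nonneg (mul_nonneg (by positivity) hR)]
  calc ‖mittagLefflerTerm μ ϑ ζ z m‖ * (‖z‖ * ((ζ + m) / (m + 1) *
        (Gamma (μ * m + ϑ) / Gamma (μ * m + ϑ + μ))))
      ≤ ‖mittagLefflerTerm μ ϑ ζ z m‖ * (|z| * (ζ + 1) *
        (Gamma (μ * m + ϑ) / Gamma (μ * m + ϑ + μ))) := by
        rw [Real.norm_eq_abs z, mul_assoc |z|]
        gcongr
    _ ≤ 1 / 2 * ‖mittagLefflerTerm μ ϑ ζ z m‖ := by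
        rw [mul_comm (1 / 2)]
        gcongr

end MittagLeffler

noncomputable def fcpCoeff (μ ϑ ζ lam : ℝ) (n k : ℕ) : ℝ :=
  (-lam) ^ k * risingFactorial (ζ + n) k / (k ! * Gamma (μ * (n + k : ℕ) + ϑ))

theorem fcpP_eq_tsum (μ ϑ ζ θ lam : ℝ) (n : ℕ) {t : ℝ} (ht : 0 ≤ t) :
    fcpP μ ϑ ζ θ lam n t = risingFactorial ζ n * Gamma ϑ * lam ^ n / n ! *
      ∑' k : ℕ, fcpCoeff μ ϑ ζ lam n k * t ^ (θ * ((n : ℝ) + k)) := by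
  rw [fcpP, ← tsum_mul_left, ← tsum_mul_left]
  refine tsum_congr fun k => ?_
  rw [fcpCoeff, show θ * ((n : ℝ) + k) = θ * (n + k : ℕ) by push_cast; ring,
    rpow_mul_natCast ht, neg_mul_eq_neg_mul, mul_pow, mul_pow, pow_add]
  ring

theorem norm_fcpCoeff_mul_rpow_le {μ ϑ ζ θ lam : ℝ} (hμ : 0 < μ) (hζ : 0 < ζ) (hϑ : 0 < ϑ)
    (hlam : 0 < lam) (n k : ℕ) {t : ℝ} (ht : 0 ≤ t) :
    ‖fcpCoeff μ ϑ ζ lam n k * t ^ (θ * ((n : ℝ) + k))‖ ≤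
      n ! / (risingFactorial ζ n * lam ^ n) *
        mittagLefflerTerm μ ϑ ζ (2 * lam * t ^ θ) (n + k) := by
  have hρ := risingFactorial_pos hζ n
  have hfac : (1 : ℝ) / k ! ≤ n ! * 2 ^ (n + k) / (n + k)! := by
    rw [div_le_div_iff₀ (by positivity) (by positivity), one_mul, mul_right_comm]
    exact_mod_cast Nat.add_factorial_le_factorial_mul_factorial_mul_two_pow n k
  set X := lam ^ k * risingFactorial (ζ + n) k * (t ^ θ) ^ (n + k) /
    Gamma (μ * (n + k : ℕ) + ϑ) with hXdef
  have hX : 0 ≤ X := by have := risingFactorial_pos (by positivity : 0 < ζ + n) k; positivity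
  calc ‖fcpCoeff μ ϑ ζ lam n k * t ^ (θ * ((n : ℝ) + k))‖ = X * (1 / k !) := by
        rw [fcpCoeff, show θ * ((n : ℝ) + k) = θ * (n + k : ℕ) by push_cast; ring,
          rpow_mul_natCast ht, Real.norm_eq_abs, abs_mul, abs_div,
          abs_mul, abs_pow, abs_neg, abs_of_pos hlam,
          abs_of_pos (risingFactorial_pos (by positivity) k),
          abs_of_pos (by positivity), abs_of_nonneg (by positivity), hXdef]
        field_simp
    _ ≤ X * (n ! * 2 ^ (n + k) / (n + k)!) := by gcongr
    _ = _ := by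
        rw [mittagLefflerTerm, risingFactorial_add hζ, mul_pow, mul_pow, pow_add lam, hXdef]
        field_simp

section SeriesIntegral

variable {Ω : Type*} [MeasurableSpace Ω] {P : Measure Ω}

theorem integrable_and_summable_integral_of_integrable_tsum {G : ℕ → Ω → ℝ}
    (hG0 : ∀ k ω, 0 ≤ G k ω) (hGm : ∀ k, AEStronglyMeasurable (G k) P)
    (hGs : ∀ ω, Summable fun k => G k ω) (hint : Integrable (fun ω => ∑' k, G k ω) P) :
    (∀ k, Integrable (G k) P) ∧ Summable fun k => ∫ ω, G k ω ∂P := by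
  have hGi : ∀ k, Integrable (G k) P := fun k =>
    hint.mono' (hGm k) (ae_of_all _ fun ω => by
      rw [Real.norm_of_nonneg (hG0 k ω)]
      exact (hGs ω).le_tsum k fun j _ => hG0 j ω)
  refine ⟨hGi, summable_of_sum_range_le (c := ∫ ω, ∑' k, G k ω ∂P)
    (fun k => integral_nonneg (hG0 k)) fun N => ?_⟩
  rw [← integral_finsetSum _ fun k _ => hGi k]
  exact integral_mono (integrable_finsetSum _ fun k _ => hGi k) hint fun ω =>
    (hGs ω).sum_le_tsum _ fun j _ => hG0 j ω

theorem summable_norm_integral_and_integral_tsum_of_norm_le {F G : ℕ → Ω → ℝ}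
    (hFm : ∀ k, AEStronglyMeasurable (F k) P) (hFG : ∀ k ω, ‖F k ω‖ ≤ G k ω)
    (hGi : ∀ k, Integrable (G k) P) (hGs : Summable fun k => ∫ ω, G k ω ∂P) :
    (Summable fun k => ‖∫ ω, F k ω ∂P‖) ∧ ∫ ω, ∑' k, F k ω ∂P = ∑' k, ∫ ω, F k ω ∂P := by
  have hFi : ∀ k, Integrable (F k) P := fun k => (hGi k).mono' (hFm k) (ae_of_all _ (hFG k))
  have hFs : Summable fun k => ∫ ω, ‖F k ω‖ ∂P :=
    hGs.of_nonneg_of_le (fun k => integral_nonneg fun ω => norm_nonneg _)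
      fun k => integral_mono (hFi k).norm (hGi k) (hFG k)
  exact ⟨hFs.of_nonneg_of_le (fun k => norm_nonneg _) fun k => norm_integral_le_integral_norm _,
    (integral_tsum_of_summable_integral_norm hFi hFs).symm⟩

end SeriesIntegral

theorem tcfcp_pmf_general {Ω : Type*} [MeasurableSpace Ω] (P : Measure Ω)
    (μ ϑ ζ θ lam : ℝ) (hμ : 0 < μ) (hζ : 0 < ζ) (hϑ : μ * ζ ≤ ϑ)
    (hlam : 0 < lam)
    (H : Ω → ℝ) (hHm : Measurable H) (hH0 : ∀ ω, 0 ≤ H ω)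
    (hint : Integrable (fun ω => mittagLeffler μ ϑ ζ (2 * lam * H ω ^ θ)) P)
    (n : ℕ) :
    (Summable fun k : ℕ =>
      |(-lam) ^ k * risingFactorial (ζ + n) k / (k.factorial * Real.Gamma (μ * (n + k : ℕ) + ϑ)) *
        ∫ ω, H ω ^ (θ * ((n : ℝ) + k)) ∂P|) ∧
    ((∫ ω, fcpP μ ϑ ζ θ lam n (H ω) ∂P)
      = risingFactorial ζ n * Real.Gamma ϑ * lam ^ n / n.factorial *
        ∑' k : ℕ, (-lam) ^ k * risingFactorial (ζ + n) k /
          (k.factorial * Real.Gamma (μ * (n + k : ℕ) + ϑ)) *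
          ∫ ω, H ω ^ (θ * ((n : ℝ) + k)) ∂P) := by
  have hϑ0 : 0 < ϑ := (mul_pos hμ hζ).trans_le hϑ
  set G : ℕ → Ω → ℝ := fun m ω => mittagLefflerTerm μ ϑ ζ (2 * lam * H ω ^ θ) m
  obtain ⟨hGi, hGs⟩ := integrable_and_summable_integral_of_integrable_tsum (G := G)
    (fun m ω => mittagLefflerTerm_nonneg hμ hζ hϑ0 (by have := hH0 ω; positivity) m)
    (fun m => Measurable.aestronglyMeasurable (by unfold G mittagLefflerTerm; fun_prop))
    (fun ω => summable_mittagLefflerTerm hμ hζ hϑ0 _)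
    (by simpa only [mittagLeffler_eq_tsum] using hint)
  set K := (n ! : ℝ) / (risingFactorial ζ n * lam ^ n)
  obtain ⟨hsum, hswap⟩ := summable_norm_integral_and_integral_tsum_of_norm_le
    (F := fun k ω => fcpCoeff μ ϑ ζ lam n k * H ω ^ (θ * ((n : ℝ) + k)))
    (G := fun k ω => K * G (n + k) ω)
    (fun k => Measurable.aestronglyMeasurable (by fun_prop))
    (fun k ω => norm_fcpCoeff_mul_rpow_le hμ hζ hϑ0 hlam n k (hH0 ω))
    (fun k => (hGi (n + k)).const_mul K)
    (by simpa only [integral_const_mul, Function.comp_apply] using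
      (hGs.comp_injective (add_right_injective n)).mul_left K)
  simp only [integral_const_mul, Real.norm_eq_abs] at hsum hswap
  refine ⟨hsum, ?_⟩
  rw [integral_congr_ae (ae_of_all _ fun ω => fcpP_eq_tsum μ ϑ ζ θ lam n (hH0 ω)),
    integral_const_mul, hswap]
  rfl

/-- The pmf of the time-changed fractional counting process:
`z(n) = 𝔼[P(n,H)] = (ζ)_n Γ(ϑ) λ^n/n! ∑_k (−λ)^k (ζ+n)_k/(k! Γ(μ(n+k)+ϑ)) 𝔼[H^{θ(n+k)}]`,
the series converging absolutely. -/
theorem tcfcp_pmf {Ω : Type*} [MeasurableSpace Ω] (P : Measure Ω) [IsProbabilityMeasure P]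
    (μ ϑ ζ θ lam : ℝ) (hμ : 0 < μ) (hμ1 : μ ≤ 1) (hζ : 0 < ζ) (hϑ : μ * ζ ≤ ϑ)
    (hθ : 0 < θ) (hθ1 : θ ≤ 1) (hlam : 0 < lam)
    (H : Ω → ℝ) (hHm : Measurable H) (hH0 : ∀ ω, 0 ≤ H ω)
    (hint : Integrable (fun ω => mittagLeffler μ ϑ ζ (2 * lam * H ω ^ θ)) P)
    (n : ℕ) :
    (Summable fun k : ℕ =>
      |(-lam) ^ k * risingFactorial (ζ + n) k / (k.factorial * Real.Gamma (μ * (n + k : ℕ) + ϑ)) *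
        ∫ ω, H ω ^ (θ * ((n : ℝ) + k)) ∂P|) ∧
    ((∫ ω, fcpP μ ϑ ζ θ lam n (H ω) ∂P)
      = risingFactorial ζ n * Real.Gamma ϑ * lam ^ n / n.factorial *
        ∑' k : ℕ, (-lam) ^ k * risingFactorial (ζ + n) k /
          (k.factorial * Real.Gamma (μ * (n + k : ℕ) + ϑ)) *
          ∫ ω, H ω ^ (θ * ((n : ℝ) + k)) ∂P) :=
  tcfcp_pmf_general P μ ϑ ζ θ lam hμ hζ hϑ hlam H hHm hH0 hint n
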